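/- arXiv:1910.03332 — 2 statements merged into one kernel-verified Lean document; each statement's English description precedes it below -/
import Mathlib

section
/- Let ε > 0, let l be a natural number, and let G be a simple graph on a finite vertex type V with edge weights w : Sym2 V → ℝ such that every edge weight lies in the set {(1+ε)^i : 0 ≤ i ≤ l}. For each 0 ≤ i ≤ l, let a_i denote the cardinality of V minus the number of connected components of G_{≤(1+ε)^i}. Then the total weight of any minimum spanning forest of G equals a_0 + Σ_{i=1}^{l} (a_i − a_{i−1})·(1+ε)^i. -/
/-- `F` is a spanning forest of `H`: a spanning subgraph (edges a subset of those of `H`)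
that is acyclic and has the same reachability relation as `H`. -/
def IsSpanningForest {V : Type*} (H F : SimpleGraph V) : Prop :=
  F ≤ H ∧ F.IsAcyclic ∧ ∀ u v : V, F.Reachable u v ↔ H.Reachable u v

/-- The total weight of the edges of a graph. -/
noncomputable def totalWeight {V : Type*} (w : Sym2 V → ℝ) (F : SimpleGraph V) : ℝ :=
  ∑ᶠ e ∈ F.edgeSet, w e

/-- `F` is a minimum spanning forest of `H` with respect to the weights `w`. -/
def IsMSF {V : Type*} (w : Sym2 V → ℝ) (H F : SimpleGraph V) : Prop :=
  IsSpanningForest H F ∧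
    ∀ F' : SimpleGraph V, IsSpanningForest H F' → totalWeight w F ≤ totalWeight w F'

/-- The spanning subgraph `G_{≤ t}` of `G` consisting of the edges of `G` of weight at most `t`. -/
def leSub {V : Type*} (w : Sym2 V → ℝ) (G : SimpleGraph V) (t : ℝ) : SimpleGraph V :=
  SimpleGraph.fromEdgeSet {e ∈ G.edgeSet | w e ≤ t}

/-! If every weight lies in `t 0 < ⋯ < t l`, the layer-cake formula writes the weight of a graph
`F` as `|E F| t l - ∑_{i<l} |E F_{≤ t i}| (t (i+1) - t i)`. A forest inside `G_{≤ t i}` has at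
most `a i = |V| - c(G_{≤ t i})` edges, with equality for a spanning forest, so every spanning
forest of `G` weighs at least `a l t l - ∑_{i<l} a i (t (i+1) - t i)`. Kruskal's algorithm
produces a single forest that is a spanning forest of every `G_{≤ t i}` at once, so the bound is
attained, and summation by parts turns it into the stated formula. -/

open Finset SimpleGraph

lemma StrictMono.apply_eq_sub_sum_ite_le {t : ℕ → ℝ} (ht : StrictMono t) {k l : ℕ}
    (hkl : k ≤ l) :
    t k = t l - ∑ i ∈ range l, if t k ≤ t i then t (i + 1) - t i else 0 := by
  have hIco : (range l).filter (fun i => t k ≤ t i) = Ico k l := by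
    ext i
    simp only [mem_filter, mem_range, mem_Ico, ht.le_iff_le]
    omega
  rw [← sum_filter, hIco, sum_Ico_sub _ hkl, sub_sub_cancel]

lemma Finset.sum_layercake {ι : Type*} (s : Finset ι) {f : ι → ℝ} {t : ℕ → ℝ}
    (ht : StrictMono t) {l : ℕ} (hf : ∀ x ∈ s, ∃ k ≤ l, f x = t k) :
    ∑ x ∈ s, f x =
      #s * t l - ∑ i ∈ range l, #{x ∈ s | f x ≤ t i} * (t (i + 1) - t i) := by
  calc ∑ x ∈ s, f x
      = ∑ x ∈ s, (t l - ∑ i ∈ range l, if f x ≤ t i then t (i + 1) - t i else 0) := by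
        refine sum_congr rfl fun x hx => ?_
        obtain ⟨k, hkl, hfx⟩ := hf x hx
        rw [hfx]
        exact ht.apply_eq_sub_sum_ite_le hkl
    _ = _ := by
        rw [sum_sub_distrib, sum_const, sum_comm]
        simp only [sum_ite, sum_const, nsmul_eq_mul, mul_zero, add_zero]

lemma sum_Icc_by_parts (c t : ℕ → ℝ) (l : ℕ) :
    c 0 * t 0 + ∑ i ∈ Icc 1 l, (c i - c (i - 1)) * t i =
      c l * t l - ∑ i ∈ range l, c i * (t (i + 1) - t i) := by
  induction l with
  | zero => simp
  | succ l ih =>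
    rw [sum_Icc_succ_top (by omega), sum_range_succ, ← add_assoc, ih, Nat.add_sub_cancel]
    ring

namespace SimpleGraph

variable {V : Type*} {G H F : SimpleGraph V}

lemma Reachable.of_sup_edge {x y u v : V} (h : (H ⊔ edge x y).Reachable u v) :
    H.Reachable u v ∨ (H.Reachable u x ∧ H.Reachable y v) ∨
      (H.Reachable u y ∧ H.Reachable x v) := by
  obtain ⟨p⟩ := h
  induction p with
  | nil => exact .inl .rfl
  | cons hab _ ih =>
    rw [sup_adj, edge_adj] at hab
    rcases hab with hab | ⟨⟨rfl, rfl⟩ | ⟨rfl, rfl⟩, -⟩ <;>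
      grind [Adj.reachable, Reachable.refl, Reachable.symm, Reachable.trans]

lemma card_connectedComponent_sup_edge [Finite V] {x y : V} (h : ¬H.Reachable x y) :
    Nat.card (H ⊔ edge x y).ConnectedComponent + 1 = Nat.card H.ConnectedComponent := by
  classical
  have hxy : (H ⊔ edge x y).Adj x y := by
    simp only [sup_adj, edge_adj, true_or, true_and]
    exact .inr fun hxy => h (hxy ▸ .rfl)
  let ψ : {c // c ≠ H.connectedComponentMk y} → (H ⊔ edge x y).ConnectedComponent :=
    fun c => c.1.map (Hom.ofLE le_sup_left)
  have hψ : ψ.Bijective := by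
    constructor
    · rintro ⟨c, hc⟩ ⟨d, hd⟩ hcd
      induction c using ConnectedComponent.ind
      induction d using ConnectedComponent.ind
      simp only [ψ, ConnectedComponent.map_mk, ConnectedComponent.eq] at hcd
      simp only [ne_eq, ConnectedComponent.eq] at hc hd
      rcases hcd.of_sup_edge with huv | ⟨-, hyv⟩ | ⟨huy, -⟩
      · exact Subtype.ext (ConnectedComponent.sound huv)
      · exact (hd hyv.symm).elim
      · exact (hc huy).elim
    · intro d
      induction d using ConnectedComponent.ind with | h v => ?_
      by_cases hv : H.connectedComponentMk v = H.connectedComponentMk y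
      · refine ⟨⟨H.connectedComponentMk x, by simpa using h⟩, ?_⟩
        simp only [ψ, ConnectedComponent.map_mk, ConnectedComponent.eq]
        exact hxy.reachable.trans ((ConnectedComponent.exact hv).symm.mono le_sup_left)
      · exact ⟨⟨_, hv⟩, rfl⟩
  rw [← Nat.card_congr (Equiv.ofBijective ψ hψ), ← Finite.card_option,
    Nat.card_congr (Equiv.optionSubtypeNe _)]

lemma deleteEdges_sup_edge_of_adj {x y : V} (h : G.Adj x y) :
    G.deleteEdges {s(x, y)} ⊔ edge x y = G := by
  ext a b
  simp only [sup_adj, deleteEdges_adj, edge_adj, Set.mem_singleton_iff, Sym2.eq_iff]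
  grind [G.adj_symm, G.ne_of_adj]

lemma card_connectedComponent_bot [Finite V] :
    Nat.card (⊥ : SimpleGraph V).ConnectedComponent = Nat.card V :=
  (Nat.card_eq_of_bijective _ ⟨fun _ _ h => reachable_bot.1 (ConnectedComponent.exact h),
    fun c => c.exists_rep⟩).symm

/-- Each edge of a forest is a bridge, so deleting it adds exactly one component. -/
theorem IsAcyclic.ncard_edgeSet_add_card_connectedComponent [Finite V] (hF : F.IsAcyclic) :
    F.edgeSet.ncard + Nat.card F.ConnectedComponent = Nat.card V := by
  induction hn : F.edgeSet.ncard generalizing F with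
  | zero =>
    rw [Set.ncard_eq_zero, edgeSet_eq_empty] at hn
    rw [hn, card_connectedComponent_bot, zero_add]
  | succ n ih =>
    obtain ⟨e, he⟩ := Set.nonempty_of_ncard_ne_zero (s := F.edgeSet) (by omega)
    induction e using Sym2.ind with | h x y => ?_
    have hbridge : ¬(F.deleteEdges {s(x, y)}).Reachable x y :=
      isAcyclic_iff_forall_adj_isBridge.1 hF (he : F.Adj x y)
    have hcount := ih (hF.anti (deleteEdges_le _)) (by
      rw [edgeSet_deleteEdges, Set.ncard_sdiff_singleton_of_mem he, hn, Nat.add_sub_cancel])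
    rw [← card_connectedComponent_sup_edge hbridge, deleteEdges_sup_edge_of_adj he] at hcount
    omega

end SimpleGraph

section SpanningForest

variable {V : Type*} {H F₀ F : SimpleGraph V}

lemma IsSpanningForest.of_le (h₀ : IsSpanningForest H F₀) (h₀F : F₀ ≤ F) (hFH : F ≤ H)
    (hF : F.IsAcyclic) : IsSpanningForest H F :=
  ⟨hFH, hF, fun u v => ⟨(·.mono hFH), fun h => ((h₀.2.2 u v).2 h).mono h₀F⟩⟩

lemma IsSpanningForest.card_connectedComponent_eq (h : IsSpanningForest H F) :
    Nat.card F.ConnectedComponent = Nat.card H.ConnectedComponent :=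
  Nat.card_congr (Quot.congrRight h.2.2)

lemma IsSpanningForest.ncard_edgeSet [Finite V] (h : IsSpanningForest H F) :
    F.edgeSet.ncard = Nat.card V - Nat.card H.ConnectedComponent := by
  rw [← h.card_connectedComponent_eq, ← h.2.1.ncard_edgeSet_add_card_connectedComponent,
    Nat.add_sub_cancel]

lemma SimpleGraph.IsAcyclic.ncard_edgeSet_le [Finite V] (hF : F.IsAcyclic) (hFH : F ≤ H) :
    F.edgeSet.ncard ≤ Nat.card V - Nat.card H.ConnectedComponent := by
  have := ConnectedComponent.card_le_card_of_le hFH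
  have := hF.ncard_edgeSet_add_card_connectedComponent
  omega

/-- Kruskal's algorithm, processing the graphs of the chain in order. -/
lemma exists_isSpanningForest_inf_of_monotone {H : ℕ → SimpleGraph V} (hH : Monotone H)
    (k : ℕ) :
    ∃ F, IsSpanningForest (H k) F ∧ ∀ i ≤ k, IsSpanningForest (H i) (F ⊓ H i) := by
  induction k with
  | zero =>
    obtain ⟨F, hFH, hF, hreach⟩ := (H 0).exists_isAcyclic_reachable_eq_le
    have hsf : IsSpanningForest (H 0) F := ⟨hFH, hF, by simp [hreach]⟩
    refine ⟨F, hsf, fun i hi => ?_⟩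
    rwa [Nat.le_zero.1 hi, inf_eq_left.2 hFH]
  | succ k ih =>
    obtain ⟨F₀, hF₀, hslices⟩ := ih
    obtain ⟨F, hF₀F, hFH, hF, hreach⟩ := exists_isAcyclic_reachable_eq_le_of_le_of_isAcyclic
      (hF₀.1.trans (hH k.le_succ)) hF₀.2.1
    have hsf : IsSpanningForest (H (k + 1)) F := ⟨hFH, hF, by simp [hreach]⟩
    refine ⟨F, hsf, fun i hi => ?_⟩
    rcases hi.lt_or_eq with hi | rfl
    · exact (hslices i (Nat.lt_succ_iff.1 hi)).of_le (inf_le_inf_right _ hF₀F) inf_le_right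
        (hF.anti inf_le_left)
    · rwa [inf_eq_left.2 hFH]

end SpanningForest

section leSub

variable {V : Type*} {w : Sym2 V → ℝ} {G F : SimpleGraph V} {t : ℝ}

lemma edgeSet_leSub : (leSub w G t).edgeSet = {e ∈ G.edgeSet | w e ≤ t} := by
  rw [leSub, edgeSet_fromEdgeSet, sdiff_eq_left]
  exact Set.disjoint_left.2 fun e he => G.not_isDiag_of_mem_edgeSet he.1

lemma leSub_le : leSub w G t ≤ G :=
  (fromEdgeSet_mono (Set.sep_subset _ _)).trans_eq G.fromEdgeSet_edgeSet

lemma leSub_mono : Monotone (leSub w G) :=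
  fun _ _ h => fromEdgeSet_mono fun _ he => ⟨he.1, he.2.trans h⟩

lemma leSub_le_leSub (h : F ≤ G) : leSub w F t ≤ leSub w G t :=
  fromEdgeSet_mono fun _ he => ⟨edgeSet_mono h he.1, he.2⟩

lemma leSub_eq_self (h : ∀ e ∈ G.edgeSet, w e ≤ t) : leSub w G t = G := by
  rw [leSub, Set.sep_eq_self_iff_mem_true.2 h, fromEdgeSet_edgeSet]

lemma leSub_eq_inf (h : F ≤ G) : leSub w F t = F ⊓ leSub w G t := by
  ext u v
  simp only [leSub, fromEdgeSet_adj, inf_adj, Set.mem_ofPred_eq, mem_edgeSet]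
  exact ⟨fun ⟨⟨hF, hw⟩, hne⟩ => ⟨hF, ⟨h hF, hw⟩, hne⟩,
    fun ⟨hF, ⟨_, hw⟩, hne⟩ => ⟨⟨hF, hw⟩, hne⟩⟩

end leSub

section Weight

variable {V : Type*} [Finite V] {w : Sym2 V → ℝ} {G F : SimpleGraph V} {t : ℕ → ℝ}
  {l : ℕ} {r : ℕ → ℕ}

lemma totalWeight_layercake (ht : StrictMono t) (hw : ∀ e ∈ F.edgeSet, ∃ k ≤ l, w e = t k) :
    totalWeight w F = F.edgeSet.ncard * t l -
      ∑ i ∈ range l, (leSub w F (t i)).edgeSet.ncard * (t (i + 1) - t i) := by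
  have hfin := F.edgeSet.toFinite
  rw [totalWeight, finsum_mem_eq_finite_toFinset_sum _ hfin,
    sum_layercake _ ht (by simpa using hw), Set.ncard_eq_toFinset_card _ hfin]
  congr! with i
  rw [edgeSet_leSub, ← Set.ncard_coe_finset]
  congr
  ext e
  simp

lemma IsSpanningForest.le_totalWeight (hF : IsSpanningForest G F) (ht : StrictMono t)
    (hw : ∀ e ∈ G.edgeSet, ∃ k ≤ l, w e = t k)
    (hr : ∀ i, r i = Nat.card V - Nat.card (leSub w G (t i)).ConnectedComponent) :
    r l * t l - ∑ i ∈ range l, r i * (t (i + 1) - t i) ≤ totalWeight w F := by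
  have hGl : leSub w G (t l) = G :=
    leSub_eq_self fun e he => (hw e he).elim fun k hk => hk.2 ▸ ht.monotone hk.1
  rw [totalWeight_layercake ht fun e he => hw e (edgeSet_mono hF.1 he), hr, hGl,
    ← hF.ncard_edgeSet]
  gcongr with i
  · exact sub_nonneg.2 (ht.monotone i.le_succ)
  · rw [hr]
    exact_mod_cast (hF.2.1.anti leSub_le).ncard_edgeSet_le (leSub_le_leSub hF.1)

lemma exists_isSpanningForest_totalWeight_eq (ht : StrictMono t)
    (hw : ∀ e ∈ G.edgeSet, ∃ k ≤ l, w e = t k)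
    (hr : ∀ i, r i = Nat.card V - Nat.card (leSub w G (t i)).ConnectedComponent) :
    ∃ K, IsSpanningForest G K ∧
      totalWeight w K = r l * t l - ∑ i ∈ range l, r i * (t (i + 1) - t i) := by
  have hGl : leSub w G (t l) = G :=
    leSub_eq_self fun e he => (hw e he).elim fun k hk => hk.2 ▸ ht.monotone hk.1
  obtain ⟨K, hK, hslices⟩ :=
    exists_isSpanningForest_inf_of_monotone (fun _ _ h => leSub_mono (ht.monotone h)) l
  rw [hGl] at hK
  refine ⟨K, hK, ?_⟩
  rw [totalWeight_layercake ht fun e he => hw e (edgeSet_mono hK.1 he), hK.ncard_edgeSet,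
    ← hGl, ← hr]
  congr! with i hi
  rw [leSub_eq_inf hK.1, (hslices i (mem_range.1 hi).le).ncard_edgeSet, hr]

end Weight

theorem msf_weight_from_class_sizes {V : Type*} [Fintype V] (ε : ℝ) (hε : 0 < ε) (l : ℕ)
    (G : SimpleGraph V) (w : Sym2 V → ℝ)
    (hw : ∀ e ∈ G.edgeSet, ∃ i : ℕ, i ≤ l ∧ w e = (1 + ε) ^ i)
    (a : ℕ → ℕ)
    (ha : ∀ i : ℕ,
      a i = Fintype.card V - Nat.card (leSub w G ((1 + ε) ^ i)).ConnectedComponent)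
    (F : SimpleGraph V) (hF : IsMSF w G F) :
    totalWeight w F =
      (a 0 : ℝ) + ∑ i ∈ Finset.Icc 1 l, ((a i : ℝ) - (a (i - 1) : ℝ)) * (1 + ε) ^ i := by
  have ht : StrictMono fun i : ℕ => (1 + ε) ^ i := pow_right_strictMono₀ (by linarith)
  have hr i : a i = Nat.card V - Nat.card (leSub w G ((1 + ε) ^ i)).ConnectedComponent := by
    rw [ha, Nat.card_eq_fintype_card (α := V)]
  obtain ⟨K, hK, hwK⟩ := exists_isSpanningForest_totalWeight_eq ht hw hr
  rw [le_antisymm ((hF.2 K hK).trans_eq hwK) (hF.1.le_totalWeight ht hw hr)]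
  simpa using (sum_Icc_by_parts (fun i => (a i : ℝ)) (fun i => (1 + ε) ^ i) l).symm
end

section
/- Let G be a simple graph on a finite vertex type V with edge weights w : Sym2 V → ℝ that are injective on the edge set of G. Let E' be a subset of the edge set of G, let G' be the spanning subgraph of G with edge set E', and let F' be a minimum spanning forest of G'. Then every edge of E' that does not belong to F' does not belong to any minimum spanning forest of G; equivalently, for every minimum spanning forest F of G, the edges of F lying in E' all belong to F'. -/
/-!
Let `e = s(a, b) ∈ E'` be an edge of `F`. The `F'`-path from `a` to `b` crosses the cut of `F - e`
separating `a` from `b` along some edge `f`, and deleting `f` from the forest `F'` separates `a`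
from `b`. Hence exchanging `e` for `f` in `F`, and `f` for `e` in `F'`, yields spanning forests of
`G` and `G'`, so minimality of both gives `w e ≤ w f ≤ w e`. By injectivity `e = f ∈ F'`.
-/

namespace SimpleGraph

variable {V : Type*} {G H : SimpleGraph V} {u v x y : V}

lemma reachable_of_forall_adj_reachable (h : ∀ ⦃p q⦄, G.Adj p q → H.Reachable p q)
    (huv : G.Reachable u v) : H.Reachable u v := by
  rw [reachable_iff_reflTransGen] at huv ⊢
  exact Relation.reflTransGen_closed
    (fun p q hpq => (reachable_iff_reflTransGen p q).mp (h hpq)) _ _ huv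

lemma Walk.IsTrail.reachable_deleteEdges_of_mem_edges {p : G.Walk u v} (hp : p.IsTrail)
    (h : s(x, y) ∈ p.edges) :
    (G.deleteEdges {s(x, y)}).Reachable u y ∨ (G.deleteEdges {s(x, y)}).Reachable v y := by
  by_contra! ⟨hu, hv⟩
  exact hp.not_mem_edges_of_not_reachable hu hv h

lemma Walk.IsTrail.reachable_of_mem_edges {K : SimpleGraph V} {p : G.Walk u v} (hp : p.IsTrail)
    (h : s(x, y) ∈ p.edges) (hK : G.deleteEdges {s(x, y)} ≤ K) (huv : K.Reachable u v) :
    K.Reachable x y := by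
  have reachable_snd : ∀ {x y}, s(x, y) ∈ p.edges → G.deleteEdges {s(x, y)} ≤ K →
      K.Reachable u y := fun h hK =>
    (hp.reachable_deleteEdges_of_mem_edges h).elim (·.mono hK) (huv.trans <| ·.mono hK)
  have hux : K.Reachable u x :=
    reachable_snd (by rwa [Sym2.eq_swap]) (by rwa [Sym2.eq_swap])
  exact hux.symm.trans (reachable_snd h hK)

lemma IsAcyclic.not_reachable_deleteEdges_of_mem_edges (hG : G.IsAcyclic) {p : G.Walk u v}
    (hp : p.IsTrail) (h : s(x, y) ∈ p.edges) : ¬ (G.deleteEdges {s(x, y)}).Reachable u v :=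
  fun huv => isAcyclic_iff_forall_adj_isBridge.mp hG (p.adj_of_mem_edges h)
    (hp.reachable_of_mem_edges h le_rfl huv)

abbrev swapEdge (G : SimpleGraph V) (x y a b : V) : SimpleGraph V :=
  G.deleteEdges {s(x, y)} ⊔ edge a b

lemma Reachable.swapEdge {a b : V} (hab : G.Reachable a b)
    (hnr : ¬ (G.deleteEdges {s(x, y)}).Reachable a b) : (G.swapEdge x y a b).Reachable x y := by
  classical
  obtain ⟨p⟩ := hab
  have hne : a ≠ b := by
    rintro rfl
    exact hnr (Reachable.refl a)
  have hab' : (G.swapEdge x y a b).Reachable a b :=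
    Adj.reachable (Or.inr ((edge_adj ..).mpr ⟨Or.inl ⟨rfl, rfl⟩, hne⟩))
  exact p.toPath.2.isTrail.reachable_of_mem_edges
    (p.toPath.1.mem_edges_of_not_reachable_deleteEdges hnr) le_sup_left hab'

end SimpleGraph

open SimpleGraph

section SwapEdge

variable {V : Type*} {H F : SimpleGraph V} {x y a b : V}

lemma IsSpanningForest.swapEdge (hF : IsSpanningForest H F) (hab : H.Adj a b)
    (hnr : ¬ (F.deleteEdges {s(x, y)}).Reachable a b) :
    IsSpanningForest H (F.swapEdge x y a b) := by
  obtain ⟨hle, hacyc, hreach⟩ := hF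
  have hle' : F.swapEdge x y a b ≤ H :=
    sup_le ((deleteEdges_le _).trans hle) ((edge_le_iff H).mpr (Or.inr hab))
  have hxy' : (F.swapEdge x y a b).Reachable x y :=
    ((hreach a b).mpr hab.reachable).swapEdge hnr
  have hFadj : ∀ ⦃p q⦄, F.Adj p q → (F.swapEdge x y a b).Reachable p q := by
    intro p q hpq
    by_cases he : s(p, q) = s(x, y)
    · obtain ⟨rfl, rfl⟩ | ⟨rfl, rfl⟩ := Sym2.eq_iff.mp he
      exacts [hxy', hxy'.symm]
    · exact Adj.reachable (Or.inl ((deleteEdges_adj ..).mpr ⟨hpq, he⟩))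
  refine ⟨hle', (hacyc.anti (deleteEdges_le _)).sup_edge_of_not_reachable hnr,
    fun u v => ⟨(·.mono hle'), fun huv => ?_⟩⟩
  exact reachable_of_forall_adj_reachable hFadj ((hreach u v).mpr huv)

lemma totalWeight_deleteEdges_add [Finite V] (w : Sym2 V → ℝ) {e : Sym2 V} (he : e ∈ F.edgeSet) :
    totalWeight w (F.deleteEdges {e}) + w e = totalWeight w F := by
  rw [totalWeight, totalWeight, edgeSet_deleteEdges, add_comm,
    ← finsum_mem_insert w (fun h => h.2 rfl) (Set.toFinite _), Set.insert_sdiff_singleton,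
    Set.insert_eq_of_mem he]

lemma totalWeight_sup_edge [Finite V] (w : Sym2 V → ℝ) (hne : a ≠ b) (hab : ¬ F.Adj a b) :
    totalWeight w (F ⊔ edge a b) = w s(a, b) + totalWeight w F := by
  rw [totalWeight, totalWeight, edgeSet_sup, edgeSet_edge_of_ne hne, Set.union_singleton,
    finsum_mem_insert w hab (Set.toFinite _)]

lemma IsMSF.weight_le_of_swapEdge [Finite V] {w : Sym2 V → ℝ} (hF : IsMSF w H F)
    (hxy : F.Adj x y) (hab : H.Adj a b) (hnr : ¬ (F.deleteEdges {s(x, y)}).Reachable a b) :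
    w s(x, y) ≤ w s(a, b) := by
  have hmin := hF.2 _ (hF.1.swapEdge hab hnr)
  have hdel := totalWeight_deleteEdges_add w (F.mem_edgeSet.mpr hxy)
  have hsup := totalWeight_sup_edge (F := F.deleteEdges {s(x, y)}) w hab.ne (hnr ·.reachable)
  linarith

end SwapEdge

theorem msf_subgraph_filter {V : Type*} [Fintype V] (G : SimpleGraph V) (w : Sym2 V → ℝ)
    (hinj : Set.InjOn w G.edgeSet)
    (E' : Set (Sym2 V)) (hE' : E' ⊆ G.edgeSet)
    (F' : SimpleGraph V) (hF' : IsMSF w (SimpleGraph.fromEdgeSet E') F')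
    (F : SimpleGraph V) (hF : IsMSF w G F) :
    ∀ e ∈ E', e ∈ F.edgeSet → e ∈ F'.edgeSet := by
  classical
  rintro ⟨a, b⟩ heE' (heF : F.Adj a b)
  have hG'ab : (fromEdgeSet E').Adj a b := ⟨heE', heF.ne⟩
  have hF'G : F' ≤ G := hF'.1.1.trans ((fromEdgeSet_le G).mpr (Set.sdiff_subset.trans hE'))
  let S : Set V := {z | (F.deleteEdges {s(a, b)}).Reachable a z}
  have hbS : b ∉ S := isAcyclic_iff_forall_adj_isBridge.mp hF.1.2.1 heF
  obtain ⟨p⟩ := (hF'.1.2.2 a b).mpr hG'ab.reachable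
  obtain ⟨⟨⟨x, y⟩, hxy⟩, hd, hxS, hyS⟩ := p.toPath.1.exists_boundary_dart S (Reachable.refl a) hbS
  have hxy_mem : s(x, y) ∈ p.toPath.1.edges := List.mem_map_of_mem hd
  have hwle : w s(a, b) ≤ w s(x, y) :=
    hF.weight_le_of_swapEdge heF (hF'G hxy) fun h => hyS (hxS.trans h)
  have hwge : w s(x, y) ≤ w s(a, b) :=
    hF'.weight_le_of_swapEdge hxy hG'ab
      (hF'.1.2.1.not_reachable_deleteEdges_of_mem_edges p.toPath.2.isTrail hxy_mem)
  have hxy_eq : s(x, y) = s(a, b) := hinj (hF'G hxy) (hE' heE') (le_antisymm hwge hwle)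
  show s(a, b) ∈ F'.edgeSet
  rw [← hxy_eq]
  exact hxy
end
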